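/- If F = (W, ≤) is a 2-roach that is not a 1-roach, then F has a unique splitting point of depth 2. -/

import Mathlib

/-- `m` is a maximal point: `↑m = {m}`. -/
def IsMaxPt {W : Type*} (le : W → W → Prop) (m : W) : Prop :=
  ∀ x, le m x → x = m

/-- The depth of `w` is at most `n`: every strictly ascending chain (each step goes up and
not back down, i.e. moves to a strictly higher cluster) starting at `w` has length at most
`n`. -/
def DepthLE {W : Type*} (le : W → W → Prop) (w : W) (n : ℕ) : Prop :=
  ∀ l : List W, l.head? = some w → l.Chain' (fun a b => le a b ∧ ¬ le b a) → l.length ≤ n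

/-- `s` is a splitting point witnessing the `n`-roach condition: `s` has depth at most `n`,
the up-set `↑s` is partially ordered (the restriction of `le` is antisymmetric on it), and
for every `w` there is `t_w ∈ ↑s` with `↑w ∩ ↑s = ↑t_w`. -/
def IsSplittingPoint {W : Type*} (le : W → W → Prop) (n : ℕ) (s : W) : Prop :=
  DepthLE le s n ∧
  (∀ a b, le s a → le s b → le a b → le b a → a = b) ∧
  (∀ w, ∃ t, le s t ∧ ∀ x, (le w x ∧ le s x) ↔ le t x)

/-- An `n`-roach: a frame possessing a splitting point of depth at most `n`. -/
def IsNRoach {W : Type*} (le : W → W → Prop) (n : ℕ) : Prop :=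
  ∃ s, IsSplittingPoint le n s

/-!
Above a splitting point `s` of depth at most 2 every point is `s` itself or maximal. Given a
second such point `y`, let `↑y ∩ ↑s = ↑t`. If `t = s` then `y ≤ s`, so `y = s` because `s`,
having depth 2, is not maximal. Otherwise `t` is maximal; as every maximal point lies above
both `s` and `y`, it lies above `t`, so `t` is the unique maximal point and the frame would be
a 1-roach.
-/

section

variable {W : Type*} {le : W → W → Prop}

theorem IsMaxPt.depthLE_one (hrefl : ∀ w, le w w) {m : W} (hm : IsMaxPt le m) :
    DepthLE le m 1 := by
  rintro (_ | ⟨a, _ | ⟨b, rest⟩⟩) hhead hchain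
  · simp
  · simp
  · obtain rfl : a = m := by simpa using hhead
    obtain ⟨⟨hab, hba⟩, -⟩ := List.isChain_cons_cons.mp hchain
    rw [hm b hab] at hba
    exact absurd (hrefl a) hba

theorem IsSplittingPoint.le_of_isMaxPt (hrefl : ∀ w, le w w) {n : ℕ} {s m : W}
    (hs : IsSplittingPoint le n s) (hm : IsMaxPt le m) : le s m := by
  obtain ⟨t, hst, ht⟩ := hs.2.2 m
  rwa [← hm t ((ht t).mpr (hrefl t)).1]

theorem IsSplittingPoint.eq_or_isMaxPt_of_le (hrefl : ∀ w, le w w)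
    (htrans : ∀ a b c, le a b → le b c → le a c) {s x : W}
    (hs : IsSplittingPoint le 2 s) (hsx : le s x) : x = s ∨ IsMaxPt le x := by
  by_cases hxs : le x s
  · exact Or.inl (hs.2.1 x s hsx (hrefl s) hxs hsx)
  refine Or.inr fun y hxy => by_contra fun hne => ?_
  have hyx : ¬ le y x := fun hyx => hne (hs.2.1 y x (htrans _ _ _ hsx hxy) hsx hyx hxy)
  have hchain : [s, x, y].IsChain (fun a b => le a b ∧ ¬ le b a) :=
    List.isChain_cons_cons.mpr ⟨⟨hsx, hxs⟩,
      List.isChain_cons_cons.mpr ⟨⟨hxy, hyx⟩, List.isChain_singleton _⟩⟩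
  simpa using hs.1 [s, x, y] rfl hchain

theorem isNRoach_one_of_forall_isMaxPt_eq (hrefl : ∀ w, le w w)
    (hs41 : ∀ w, ∃ m, le w m ∧ IsMaxPt le m) {t : W} (ht : IsMaxPt le t)
    (huniq : ∀ m, IsMaxPt le m → m = t) : IsNRoach le 1 := by
  have hbelow : ∀ w, le w t := fun w => by
    obtain ⟨m, hwm, hm⟩ := hs41 w
    rwa [← huniq m hm]
  refine ⟨t, ht.depthLE_one hrefl, fun a b hta htb _ _ => by rw [ht a hta, ht b htb], ?_⟩
  refine fun w => ⟨t, hrefl t, fun x => ⟨And.right, fun htx => ?_⟩⟩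
  rw [ht x htx]
  exact ⟨hbelow w, hrefl t⟩

end

theorem stmt_14_general {W : Type*} (le : W → W → Prop)
    (hrefl : ∀ w, le w w)
    (htrans : ∀ a b c, le a b → le b c → le a c)
    (hs41 : ∀ w, ∃ m, le w m ∧ IsMaxPt le m)
    (h2 : IsNRoach le 2) (h1 : ¬ IsNRoach le 1) :
    ∃! s, IsSplittingPoint le 2 s ∧ ¬ DepthLE le s 1 := by
  obtain ⟨s, hs⟩ := h2
  have hdepth : ¬ DepthLE le s 1 := fun hd => h1 ⟨s, hd, hs.2.1, hs.2.2⟩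
  refine ⟨s, ⟨hs, hdepth⟩, fun y ⟨hy, _⟩ => ?_⟩
  obtain ⟨t, hst, ht⟩ := hs.2.2 y
  have hyt := ((ht t).mpr (hrefl t)).1
  rcases hs.eq_or_isMaxPt_of_le hrefl htrans hst with rfl | htmax
  · rcases hy.eq_or_isMaxPt_of_le hrefl htrans hyt with hts | hmax
    · exact hts.symm
    · exact absurd (hmax.depthLE_one hrefl) hdepth
  · refine absurd (isNRoach_one_of_forall_isMaxPt_eq hrefl hs41 htmax fun m hm => ?_) h1
    exact htmax m ((ht m).mp ⟨hy.le_of_isMaxPt hrefl hm, hs.le_of_isMaxPt hrefl hm⟩)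

/-- A 2-roach that is not a 1-roach has a unique splitting point of depth 2. -/
theorem stmt_14 {W : Type*} [Fintype W] (le : W → W → Prop)
    (hrefl : ∀ w, le w w)
    (htrans : ∀ a b c, le a b → le b c → le a c)
    (hroot : ∃ r, ∀ w, le r w)
    (hs41 : ∀ w, ∃ m, le w m ∧ IsMaxPt le m)
    (h2 : IsNRoach le 2) (h1 : ¬ IsNRoach le 1) :
    ∃! s, IsSplittingPoint le 2 s ∧ ¬ DepthLE le s 1 :=
  stmt_14_general le hrefl htrans hs41 h2 h1
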